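/- arXiv:2301.04128 — 4 statements merged into one kernel-verified Lean document; each statement's English description precedes it below -/
import Mathlib

section
/- Let Z ∈ ℝ^N be sorted in descending order (z₁ ≥ z₂ ≥ ... ≥ z_N) and let Y be the Euclidean projection of Z onto the bounded simplex D = {p ∈ [0,1]^N : Σ pₙ ≤ M}. Then Y is also sorted in descending order. -/
/-!
Swapping two coordinates of `Y` preserves `D`, so the variational inequality of the projection,
`⟪Z - Y, P - Y⟫ ≤ 0` for all `P ∈ D`, applies to the swapped point. For `i ≤ j` that inner
product equals `(Y j - Y i) * ((Z i - Z j) + (Y j - Y i))`, which is positive if `Y i < Y j`.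
-/

open Finset

section

variable {ι : Type*} [Fintype ι]

theorem convex_cube_inter_sum_le (M : ℝ) :
    Convex ℝ {p : EuclideanSpace ℝ ι | (∀ n, 0 ≤ p n ∧ p n ≤ 1) ∧ ∑ n, p n ≤ M} := by
  rintro x ⟨hx, hxM⟩ y ⟨hy, hyM⟩ a b ha hb hab
  refine ⟨fun n => ?_, ?_⟩
  · simp only [PiLp.add_apply, PiLp.smul_apply, smul_eq_mul]
    obtain ⟨hx0, hx1⟩ := hx n
    obtain ⟨hy0, hy1⟩ := hy n
    constructor <;> nlinarith
  · calc ∑ n, (a • x + b • y) n = a * ∑ n, x n + b * ∑ n, y n := by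
          simp [sum_add_distrib, mul_sum]
      _ ≤ a * M + b * M := by gcongr
      _ = M := by rw [← add_mul, hab, one_mul]

theorem inner_swap_coords_sub [DecidableEq ι] (z y : EuclideanSpace ℝ ι) (i j : ι) :
    inner ℝ z (WithLp.toLp 2 (y ∘ Equiv.swap i j) - y) = (z i - z j) * (y j - y i) := by
  rcases eq_or_ne i j with rfl | hij
  · simp
  rw [PiLp.inner_apply, Fintype.sum_eq_add i j hij]
  · simp only [PiLp.sub_apply, Function.comp_apply, Equiv.swap_apply_left,
      Equiv.swap_apply_right, RCLike.inner_apply, Real.ringHom_apply]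
    ring
  · rintro k ⟨hki, hkj⟩
    simp [Equiv.swap_apply_of_ne_of_ne hki hkj]

end

theorem real_inner_sub_sub_nonpos_of_forall_norm_sub_le {F : Type*} [NormedAddCommGroup F]
    [InnerProductSpace ℝ F] {K : Set F} (hK : Convex ℝ K) {u v : F} (hv : v ∈ K)
    (hmin : ∀ w ∈ K, ‖u - v‖ ≤ ‖u - w‖) {w : F} (hw : w ∈ K) :
    inner ℝ (u - v) (w - v) ≤ 0 := by
  have : Nonempty K := ⟨⟨v, hv⟩⟩
  refine (norm_eq_iInf_iff_real_inner_le_zero hK hv).1 ?_ w hw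
  exact le_antisymm (le_ciInf fun w => hmin w w.2)
    (ciInf_le ⟨0, Set.forall_mem_range.2 fun _ => norm_nonneg _⟩ (⟨v, hv⟩ : K))

theorem stmt_4_general (N : ℕ) (M : ℝ)
    (Z Y : EuclideanSpace ℝ (Fin N))
    (hsort : ∀ i j : Fin N, i ≤ j → Z j ≤ Z i)
    (D : Set (EuclideanSpace ℝ (Fin N)))
    (hD : D = {p | (∀ n, 0 ≤ p n ∧ p n ≤ 1) ∧ ∑ n, p n ≤ M})
    (hYD : Y ∈ D) (hproj : ∀ P ∈ D, ‖Z - Y‖ ≤ ‖Z - P‖) :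
    ∀ i j : Fin N, i ≤ j → Y j ≤ Y i := by
  subst hD
  intro i j hij
  by_contra! hlt
  have hswapD : WithLp.toLp 2 (Y ∘ Equiv.swap i j) ∈
      {p : EuclideanSpace ℝ (Fin N) | (∀ n, 0 ≤ p n ∧ p n ≤ 1) ∧ ∑ n, p n ≤ M} := by
    refine ⟨fun n => hYD.1 _, ?_⟩
    simpa [Equiv.sum_comp (Equiv.swap i j) Y] using hYD.2
  have hvar := real_inner_sub_sub_nonpos_of_forall_norm_sub_le (convex_cube_inter_sum_le M)
    hYD hproj hswapD
  rw [inner_swap_coords_sub] at hvar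
  simp only [PiLp.sub_apply] at hvar
  nlinarith [hsort i j hij]

theorem stmt_4 (N : ℕ) (M : ℝ) (hM : 0 < M)
    (Z Y : EuclideanSpace ℝ (Fin N))
    (hsort : ∀ i j : Fin N, i ≤ j → Z j ≤ Z i)
    (D : Set (EuclideanSpace ℝ (Fin N)))
    (hD : D = {p | (∀ n, 0 ≤ p n ∧ p n ≤ 1) ∧ ∑ n, p n ≤ M})
    (hYD : Y ∈ D) (hproj : ∀ P ∈ D, ‖Z - Y‖ ≤ ‖Z - P‖) :
    ∀ i j : Fin N, i ≤ j → Y j ≤ Y i :=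
  stmt_4_general N M Z Y hsort D hD hYD hproj
end

section
/- Let Z ∈ ℝ^N be sorted descending with Z ≥ 0 and ⟨1, Π_{[0,1]^N}(Z)⟩ ≥ M, and let Y = Π_D(Z) be its projection onto D = {p ∈ [0,1]^N : Σ pₙ ≤ M}. Let i* = |{i : yᵢ = 1}|. Then the vector (y_{i*+1}, ..., y_N) equals the Euclidean projection of (z_{i*+1}, ..., z_N) onto the simplex S = {v ∈ [0,∞)^{N−i*} : Σⱼ vⱼ = M − i*}. -/
/-!
Optimality of `Y` on the convex set `D` is the variational inequality `⟪Z - Y, P - Y⟫ ≤ 0` for all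
`P ∈ D`. Testing it against the perturbations `Y + ε (e_a - e_b)`, which move mass from a positive
coordinate `b` to a coordinate `a` below `1`, shows that the residual `Z - Y` is no larger at `a`
than at `b`. Hence `Y` inherits the ordering of `Z`, so its ones occupy the first `i*` positions;
testing against `Y + ε e_a` shows that the budget constraint is active when the clamped vector
already has mass `M`. On the tail, the residual is therefore maximal, and constant, on the support
of `Y`, which is exactly the optimality condition for the projection onto the simplex of mass
`M - i*`.
-/

open Finset RealInnerProductSpace

section InnerProductSpace

variable {F : Type*} [NormedAddCommGroup F] [InnerProductSpace ℝ F]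

theorem inner_sub_nonpos_of_forall_norm_sub_le {K : Set F} (hK : Convex ℝ K) {u v : F}
    (hv : v ∈ K) (hmin : ∀ w ∈ K, ‖u - v‖ ≤ ‖u - w‖) :
    ∀ w ∈ K, ⟪u - v, w - v⟫ ≤ 0 := by
  have : Nonempty K := ⟨⟨v, hv⟩⟩
  refine (norm_eq_iInf_iff_real_inner_le_zero hK hv).1 (le_antisymm ?_ ?_)
  · exact le_ciInf fun w => hmin w w.2
  · exact ciInf_le ⟨0, Set.forall_mem_range.2 fun _ => norm_nonneg _⟩ (⟨v, hv⟩ : K)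

theorem norm_sub_le_norm_sub_of_inner_sub_nonpos {u v w : F} (h : ⟪u - v, w - v⟫ ≤ 0) :
    ‖u - v‖ ≤ ‖u - w‖ := by
  have hsq : ‖u - w‖ ^ 2 = ‖u - v‖ ^ 2 - 2 * ⟪u - v, w - v⟫ + ‖w - v‖ ^ 2 := by
    rw [← norm_sub_sq_real, sub_sub_sub_cancel_right]
  exact le_of_sq_le_sq (by nlinarith [sq_nonneg ‖w - v‖]) (norm_nonneg _)

end InnerProductSpace

theorem Fin.sum_univ_eq_sum_take_add_sum_drop {n k : ℕ} (f : Fin n → ℝ) (hk : k ≤ n) :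
    ∑ i, f i = ∑ i : Fin k, f ⟨i, by omega⟩ + ∑ j : Fin (n - k), f ⟨j + k, by omega⟩ := by
  rw [← Fin.sum_congr' f (show k + (n - k) = n by omega), Fin.sum_univ_add]
  congr 1
  refine Finset.sum_congr rfl fun j _ => congrArg f (Fin.ext ?_)
  simp [add_comm]

theorem sum_mul_sub_nonpos_of_forall_le_of_pos {ι : Type*} [Fintype ι] {w y v : ι → ℝ}
    (hy : ∀ j, 0 ≤ y j) (hv : ∀ j, 0 ≤ v j) (hsum : ∑ j, v j = ∑ j, y j)
    (hw : ∀ j k, 0 < y k → w j ≤ w k) : ∑ j, w j * (v j - y j) ≤ 0 := by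
  by_cases hpos : ∃ k, 0 < y k
  · obtain ⟨k, hk⟩ := hpos
    have hwy : ∀ j, w j * y j = w k * y j := fun j => by
      rcases (hy j).lt_or_eq with hj | hj
      · rw [le_antisymm (hw j k hk) (hw k j hj)]
      · simp [← hj]
    calc ∑ j, w j * (v j - y j) = ∑ j, w j * v j - ∑ j, w k * y j := by
          simp only [mul_sub, sum_sub_distrib, hwy]
      _ ≤ ∑ j, w k * v j - ∑ j, w k * y j := by
          gcongr with j; exacts [hv j, hw j k hk]
      _ = 0 := by rw [← mul_sum, ← mul_sum, hsum, sub_self]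
  · simp only [not_exists, not_lt] at hpos
    have hy0 : ∀ j, y j = 0 := fun j => le_antisymm (hpos j) (hy j)
    have hv0 : ∀ j, v j = 0 := by
      simp only [hy0, sum_const_zero] at hsum
      exact fun j => (sum_eq_zero_iff_of_nonneg fun j _ => hv j).1 hsum j (mem_univ j)
    simp [hy0, hv0]

theorem Antitone.eq_iff_lt_card_filter_eq {α : Type*} [PartialOrder α] [DecidableEq α] {n : ℕ}
    {f : Fin n → α} {c : α} (hf : Antitone f) (hle : ∀ i, f i ≤ c) (i : Fin n) :
    f i = c ↔ (i : ℕ) < (univ.filter fun j => f j = c).card := by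
  constructor
  · intro hi
    have hsub : Iic i ⊆ univ.filter fun j => f j = c := fun j hj => by
      simp only [mem_filter, mem_univ, true_and]
      exact le_antisymm (hle j) (hi ▸ hf (mem_Iic.1 hj))
    have := card_le_card hsub
    rw [Fin.card_Iic] at this
    omega
  · intro hi
    by_contra hne
    have hsub : (univ.filter fun j => f j = c) ⊆ Iio i := fun j hj => by
      simp only [mem_filter, mem_univ, true_and] at hj
      refine mem_Iio.2 (lt_of_not_ge fun hij => hne (le_antisymm (hle i) ?_))
      exact hj ▸ hf hij
    have := card_le_card hsub
    rw [Fin.card_Iio] at this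
    omega

def cappedSimplex (n : ℕ) (M : ℝ) : Set (EuclideanSpace ℝ (Fin n)) :=
  {p | (∀ i, 0 ≤ p i ∧ p i ≤ 1) ∧ ∑ i, p i ≤ M}

namespace cappedSimplex

variable {n : ℕ} {M : ℝ} {Z Y : EuclideanSpace ℝ (Fin n)}

theorem convex : Convex ℝ (cappedSimplex n M) := by
  rintro x ⟨hx01, hxM⟩ y ⟨hy01, hyM⟩ a b ha hb hab
  refine ⟨fun i => ?_, ?_⟩
  · obtain ⟨hx0, hx1⟩ := hx01 i
    obtain ⟨hy0, hy1⟩ := hy01 i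
    simp only [PiLp.add_apply, PiLp.smul_apply, smul_eq_mul]
    constructor <;> nlinarith
  · simp only [PiLp.add_apply, PiLp.smul_apply, smul_eq_mul, sum_add_distrib, ← mul_sum]
    calc a * ∑ i, x i + b * ∑ i, y i ≤ a * M + b * M := by gcongr
      _ = M := by rw [← add_mul, hab, one_mul]

theorem add_smul_single_sub_single_mem (hY : Y ∈ cappedSimplex n M) {a b : Fin n} (hab : a ≠ b)
    {ε : ℝ} (hε : 0 ≤ ε) (ha : ε ≤ 1 - Y a) (hb : ε ≤ Y b) :
    Y + ε • (EuclideanSpace.single a 1 - EuclideanSpace.single b 1) ∈ cappedSimplex n M := by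
  refine ⟨fun i => ?_, ?_⟩
  · obtain ⟨hY0, hY1⟩ := hY.1 i
    simp only [PiLp.add_apply, PiLp.smul_apply, PiLp.sub_apply, PiLp.single_apply, smul_eq_mul]
    split_ifs with hia hib hib
    · exact absurd (hia.symm.trans hib) hab
    · subst hia; constructor <;> linarith
    · subst hib; constructor <;> linarith
    · simpa using hY.1 i
  · simpa [sum_add_distrib, ← mul_sum, sum_sub_distrib] using hY.2

theorem add_smul_single_mem (hY : Y ∈ cappedSimplex n M) {a : Fin n} {ε : ℝ} (hε : 0 ≤ ε)
    (ha : ε ≤ 1 - Y a) (hsum : ε ≤ M - ∑ i, Y i) :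
    Y + ε • EuclideanSpace.single a 1 ∈ cappedSimplex n M := by
  refine ⟨fun i => ?_, ?_⟩
  · obtain ⟨hY0, hY1⟩ := hY.1 i
    by_cases hia : i = a
    · subst hia
      simp only [PiLp.add_apply, PiLp.smul_apply, PiLp.single_eq_same, smul_eq_mul, mul_one]
      constructor <;> linarith
    · simp [hia, hY0, hY1]
  · simp only [PiLp.add_apply, PiLp.smul_apply, PiLp.single_apply, smul_eq_mul, sum_add_distrib,
      ← mul_sum, sum_ite_eq', mem_univ, if_true]
    linarith

variable (hY : Y ∈ cappedSimplex n M) (hvar : ∀ P ∈ cappedSimplex n M, ⟪Z - Y, P - Y⟫ ≤ 0)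
include hY hvar

theorem sub_le_sub_of_inner_nonpos {a b : Fin n} (hab : a ≠ b) (ha : Y a < 1) (hb : 0 < Y b) :
    Z a - Y a ≤ Z b - Y b := by
  set ε := min (1 - Y a) (Y b)
  have hε : 0 < ε := lt_min (by linarith) hb
  have h := hvar _ (add_smul_single_sub_single_mem hY hab hε.le (min_le_left _ _)
    (min_le_right _ _))
  simp only [add_sub_cancel_left, inner_smul_right, inner_sub_right,
    EuclideanSpace.inner_single_right, PiLp.sub_apply, Real.ringHom_apply, one_mul] at h
  nlinarith

theorem le_of_inner_nonpos_of_sum_lt (hsum : ∑ i, Y i < M) {a : Fin n} (ha : Y a < 1) :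
    Z a ≤ Y a := by
  set ε := min (1 - Y a) (M - ∑ i, Y i)
  have hε : 0 < ε := lt_min (by linarith) (by linarith)
  have h := hvar _ (add_smul_single_mem hY hε.le (min_le_left _ _) (min_le_right _ _))
  simp only [add_sub_cancel_left, inner_smul_right,
    EuclideanSpace.inner_single_right, PiLp.sub_apply, Real.ringHom_apply, one_mul] at h
  nlinarith

theorem sum_eq_of_inner_nonpos (hcube : M ≤ ∑ i, min 1 (max 0 (Z i))) : ∑ i, Y i = M := by
  refine le_antisymm hY.2 (not_lt.1 fun hsum => ?_)
  have hclamp : ∀ i, min 1 (max 0 (Z i)) ≤ Y i := fun i => by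
    rcases (hY.1 i).2.lt_or_eq with hi | hi
    · exact min_le_of_right_le
        (max_le (hY.1 i).1 (le_of_inner_nonpos_of_sum_lt hY hvar hsum hi))
    · exact min_le_of_left_le hi.ge
  linarith [sum_le_sum fun i (_ : i ∈ univ) => hclamp i]

theorem antitone_of_inner_nonpos (hZ : Antitone Z) : Antitone Y := by
  intro i j hij
  by_contra! hlt
  have := sub_le_sub_of_inner_nonpos hY hvar (ne_of_apply_ne Y hlt.ne)
    (hlt.trans_le (hY.1 j).2) ((hY.1 i).1.trans_lt hlt)
  linarith [hZ hij]

end cappedSimplex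

theorem stmt_6 (N M : ℕ)
    (Z Y : EuclideanSpace ℝ (Fin N))
    (hsort : ∀ i j : Fin N, i ≤ j → Z j ≤ Z i)
    (hcube : (M : ℝ) ≤ ∑ i, min 1 (max 0 (Z i)))
    (D : Set (EuclideanSpace ℝ (Fin N)))
    (hD : D = {p | (∀ n, 0 ≤ p n ∧ p n ≤ 1) ∧ ∑ n, p n ≤ (M : ℝ)})
    (hYD : Y ∈ D) (hproj : ∀ P ∈ D, ‖Z - Y‖ ≤ ‖Z - P‖)
    (istar : ℕ) (histar : istar = (Finset.univ.filter (fun i : Fin N => Y i = 1)).card)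
    (Ytail Ztail : EuclideanSpace ℝ (Fin (N - istar)))
    (hYtail : ∀ j : Fin (N - istar), Ytail j = Y ⟨(j : ℕ) + istar, by have := j.isLt; omega⟩)
    (hZtail : ∀ j : Fin (N - istar), Ztail j = Z ⟨(j : ℕ) + istar, by have := j.isLt; omega⟩)
    (S : Set (EuclideanSpace ℝ (Fin (N - istar))))
    (hS : S = {v | (∀ j, 0 ≤ v j) ∧ ∑ j, v j = (M : ℝ) - istar}) :
    Ytail ∈ S ∧ ∀ V ∈ S, ‖Ztail - Ytail‖ ≤ ‖Ztail - V‖ := by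
  subst hD hS
  have hY : Y ∈ cappedSimplex N M := hYD
  have hvar := inner_sub_nonpos_of_forall_norm_sub_le cappedSimplex.convex hY hproj
  have hone : ∀ i : Fin N, Y i = 1 ↔ (i : ℕ) < istar := histar ▸
    (cappedSimplex.antitone_of_inner_nonpos hY hvar hsort).eq_iff_lt_card_filter_eq
      fun i => (hY.1 i).2
  have histarN : istar ≤ N := histar ▸ (card_filter_le _ _).trans_eq (card_fin N)
  have htail_lt : ∀ j, Ytail j < 1 := fun j =>
    hYtail j ▸ ((hY.1 _).2.lt_of_ne fun h => by have := (hone _).1 h; simp at this)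
  have htail_sum : ∑ j, Ytail j = M - istar := by
    have hsum := cappedSimplex.sum_eq_of_inner_nonpos hY hvar hcube
    rw [Fin.sum_univ_eq_sum_take_add_sum_drop _ histarN,
      sum_congr rfl fun (i : Fin istar) _ => (hone ⟨i, by omega⟩).2 i.isLt] at hsum
    simp only [sum_const, card_univ, Fintype.card_fin, nsmul_eq_mul, mul_one, ← hYtail] at hsum
    linarith
  refine ⟨⟨fun j => hYtail j ▸ (hY.1 _).1, htail_sum⟩, fun V ⟨hV0, hVsum⟩ => ?_⟩
  refine norm_sub_le_norm_sub_of_inner_sub_nonpos ?_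
  simp only [PiLp.inner_apply, PiLp.sub_apply, RCLike.inner_apply, conj_trivial, mul_comm]
  refine sum_mul_sub_nonpos_of_forall_le_of_pos (fun j => hYtail j ▸ (hY.1 _).1) hV0
    (hVsum.trans htail_sum.symm) fun j k hk => ?_
  rcases eq_or_ne j k with rfl | hjk
  · exact le_rfl
  · simp only [hZtail, hYtail] at hk ⊢
    exact cappedSimplex.sub_le_sub_of_inner_nonpos hY hvar (by simpa [Fin.ext_iff] using hjk)
      (hYtail j ▸ htail_lt j) hk
end

section
/- Let A ∈ ℝ^m with a₁ ≥ a₂ ≥ ... ≥ a_m and c > 0 with Σⱼ aⱼ ≥ c. Let I = max{i ≥ 1 : (Σ_{j=1}^{i} aⱼ − c)/i < aᵢ} and τ = (Σ_{j=1}^{I} aⱼ − c)/I, and define a*ⱼ = max(aⱼ − τ, 0). Then A* is the Euclidean projection of A onto the simplex {v ∈ [0,∞)^m : Σⱼ vⱼ = c}. -/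
theorem stmt_7 (m : ℕ) (hm : 0 < m) (A : ℕ → ℝ) (c : ℝ) (hc : 0 < c)
    (hsort : ∀ i j, i ≤ j → j < m → A j ≤ A i)
    (hsum : c ≤ ∑ j ∈ Finset.range m, A j)
    (I : ℕ)
    (hI : (1 ≤ I ∧ I ≤ m ∧ ((∑ j ∈ Finset.range I, A j) - c) / I < A (I - 1)) ∧
      ∀ i, (1 ≤ i ∧ i ≤ m ∧ ((∑ j ∈ Finset.range i, A j) - c) / i < A (i - 1)) → i ≤ I)
    (τ : ℝ) (hτ : τ = ((∑ j ∈ Finset.range I, A j) - c) / I)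
    (Avec Astar : EuclideanSpace ℝ (Fin m))
    (hAvec : ∀ j : Fin m, Avec j = A j)
    (hAstar : ∀ j : Fin m, Astar j = max (A j - τ) 0)
    (S : Set (EuclideanSpace ℝ (Fin m)))
    (hS : S = {v | (∀ j, 0 ≤ v j) ∧ ∑ j, v j = c}) :
    Astar ∈ S ∧ ∀ V ∈ S, ‖Avec - Astar‖ ≤ ‖Avec - V‖ := by
  obtain ⟨⟨hI1, hIm, hIlt⟩, hImax⟩ := hI
  have hIpos : (0:ℝ) < (I:ℝ) := by exact_mod_cast hI1
  -- τ < A j for j < I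
  have hτlt : ∀ j, j < I → τ < A j := by
    intro j hj
    have h1 : A (I-1) ≤ A j := hsort j (I-1) (by omega) (by omega)
    rw [hτ]; linarith
  -- A j ≤ τ for I ≤ j < m
  have hτge : ∀ j, I ≤ j → j < m → A j ≤ τ := by
    intro j hIj hjm
    have hAI : A I ≤ τ := by
      have hI1m : I + 1 ≤ m := by omega
      by_contra h
      push_neg at h
      have hcond : ((∑ k ∈ Finset.range (I+1), A k) - c) / (I+1 : ℕ) < A ((I+1) - 1) := by
        simp only [Nat.add_sub_cancel]
        rw [Finset.sum_range_succ]
        rw [hτ, div_lt_iff₀ hIpos] at h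
        rw [div_lt_iff₀ (by push_cast; linarith)]
        push_cast
        nlinarith
      have := hImax (I+1) ⟨by omega, hI1m, hcond⟩
      omega
    calc A j ≤ A I := hsort I j hIj hjm
    _ ≤ τ := hAI
  -- sum of thresholded values is c
  have hIτ : (I:ℝ) * τ = (∑ j ∈ Finset.range I, A j) - c := by
    rw [hτ]; field_simp
  have hBsum' : ∑ j ∈ Finset.range m, max (A j - τ) 0 = c := by
    have hsplit := Finset.sum_range_add_sum_Ico (fun j => max (A j - τ) 0) hIm
    have h1 : ∑ j ∈ Finset.Ico I m, max (A j - τ) 0 = 0 := by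
      apply Finset.sum_eq_zero
      intro j hj
      rw [Finset.mem_Ico] at hj
      have := hτge j hj.1 hj.2
      simp [max_eq_right]; linarith
    have h2 : ∑ j ∈ Finset.range I, max (A j - τ) 0 = ∑ j ∈ Finset.range I, (A j - τ) := by
      apply Finset.sum_congr rfl
      intro j hj
      rw [Finset.mem_range] at hj
      have := hτlt j hj
      rw [max_eq_left]; linarith
    rw [← hsplit, h1, h2, Finset.sum_sub_distrib, Finset.sum_const, Finset.card_range,
      nsmul_eq_mul]
    linarith
  have hBsum : ∑ j : Fin m, Astar j = c := by
    rw [show (∑ j : Fin m, Astar j) = ∑ j : Fin m, max (A j - τ) 0 from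
      Finset.sum_congr rfl (fun j _ => hAstar j)]
    rw [Fin.sum_univ_eq_sum_range (fun j => max (A j - τ) 0) m]
    exact hBsum'
  have hmem : Astar ∈ S := by
    rw [hS]
    refine ⟨fun j => ?_, hBsum⟩
    rw [hAstar]; exact le_max_right _ _
  refine ⟨hmem, ?_⟩
  intro V hV
  rw [hS] at hV
  obtain ⟨hV0, hVsum⟩ := hV
  -- key inner product inequality
  have hkey : ∑ j : Fin m, (A j - Astar j) * (V j - Astar j) ≤ 0 := by
    have hle : ∀ j : Fin m, (A j - Astar j) * (V j - Astar j) ≤ τ * (V j - Astar j) := by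
      intro j
      rw [hAstar]
      rcases le_or_gt τ (A (j:ℕ)) with h | h
      · rw [max_eq_left (by linarith)]; ring_nf; exact le_refl _
      · rw [max_eq_right (by linarith)]
        simp only [sub_zero]
        exact mul_le_mul_of_nonneg_right h.le (hV0 j)
    calc ∑ j : Fin m, (A j - Astar j) * (V j - Astar j)
        ≤ ∑ j : Fin m, τ * (V j - Astar j) := Finset.sum_le_sum (fun j _ => hle j)
      _ = τ * ((∑ j : Fin m, V j) - ∑ j : Fin m, Astar j) := by
          rw [← Finset.mul_sum, Finset.sum_sub_distrib]
      _ = 0 := by rw [hVsum, hBsum]; ring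
  -- compare squared norms
  have hsq : ∑ j : Fin m, (A j - Astar j)^2 ≤ ∑ j : Fin m, (A j - V j)^2 := by
    have hid : ∑ j : Fin m, (A j - V j)^2 =
        (∑ j : Fin m, (A j - Astar j)^2) + (∑ j : Fin m, (Astar j - V j)^2)
          - 2 * (∑ j : Fin m, (A j - Astar j) * (V j - Astar j)) := by
      rw [Finset.mul_sum, ← Finset.sum_add_distrib, ← Finset.sum_sub_distrib]
      apply Finset.sum_congr rfl
      intro j _; ring
    have hnn : 0 ≤ ∑ j : Fin m, (Astar j - V j)^2 :=
      Finset.sum_nonneg (fun j _ => sq_nonneg _)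
    linarith
  rw [EuclideanSpace.norm_eq, EuclideanSpace.norm_eq]
  apply Real.sqrt_le_sqrt
  have e1 : ∀ (W : EuclideanSpace ℝ (Fin m)) (j : Fin m),
      ‖(Avec - W) j‖ ^ 2 = (A j - W j)^2 := by
    intro W j
    have : (Avec - W) j = Avec j - W j := rfl
    rw [this, hAvec, Real.norm_eq_abs, sq_abs]
  calc ∑ j : Fin m, ‖(Avec - Astar) j‖ ^ 2
      = ∑ j : Fin m, (A j - Astar j)^2 := Finset.sum_congr rfl (fun j _ => e1 Astar j)
    _ ≤ ∑ j : Fin m, (A j - V j)^2 := hsq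
    _ = ∑ j : Fin m, ‖(Avec - V) j‖ ^ 2 := (Finset.sum_congr rfl (fun j _ => e1 V j)).symm
end

section
/- Let P*_{1:T} minimize Σ_{t=1}^T Ĥ_t(P_t, P_{t−1}) over P_t ∈ D (with P₀ = 0), where Ĥ_t is the auxiliary cost function. Let Θ_t be the top-M indicator of Λ_t. Then α Σ_{t=1}^T Σ_{n=1}^N λ_{n,t}(θ_{n,t} − p*_{n,t}) ≤ 3β* H_T, where H_T bounds the path length Σ_t ‖Θ_t − Θ_{t−1}‖₁ and β* = maxₙ βₙ. -/
noncomputable def auxCost {N : ℕ} (α γ : ℝ) (β lam P Q : Fin N → ℝ) : ℝ :=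
  (∑ j ∈ Finset.univ.filter (fun j => 0 ≤ P j - Q j ∧ P j - Q j ≤ γ),
      (3 * β j / γ) * (P j - Q j) ^ 2) +
  (∑ i ∈ Finset.univ.filter (fun i => γ < P i - Q i), 3 * β i * (P i - Q i)) +
  α * ∑ n, lam n * (1 - P n)

def memD {N : ℕ} (M : ℝ) (P : Fin N → ℝ) : Prop :=
  (∀ n, 0 ≤ P n ∧ P n ≤ 1) ∧ ∑ n, P n ≤ M

theorem stmt_13 (N M T : ℕ) (hN : 0 < N) (hM : 0 < M) (hT : 0 < T)
    (α γ : ℝ) (hα : 0 < α) (hγ0 : 0 < γ) (hγ1 : γ ≤ 1)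
    (β : Fin N → ℝ) (hβ : ∀ n, 0 ≤ β n)
    (βstar : ℝ) (hβstar : IsGreatest (Set.range β) βstar)
    (lam : ℕ → Fin N → ℝ) (hlam : ∀ t n, 0 ≤ lam t n)
    (Θ : ℕ → Fin N → ℝ) (hΘ0 : Θ 0 = 0)
    (hΘbin : ∀ t n, Θ t n = 0 ∨ Θ t n = 1)
    (hΘcard : ∀ t ∈ Finset.Icc 1 T, ∑ n, Θ t n = (M : ℝ))
    (HT : ℝ)
    (hpath : ∑ t ∈ Finset.Icc 1 T, ∑ n, |Θ t n - Θ (t - 1) n| ≤ HT)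
    (Pstar : ℕ → Fin N → ℝ) (hP0 : Pstar 0 = 0)
    (hPD : ∀ t ∈ Finset.Icc 1 T, memD (M : ℝ) (Pstar t))
    (hPopt : ∀ Q : ℕ → Fin N → ℝ, Q 0 = 0 → (∀ t ∈ Finset.Icc 1 T, memD (M : ℝ) (Q t)) →
      ∑ t ∈ Finset.Icc 1 T, auxCost α γ β (lam t) (Pstar t) (Pstar (t - 1)) ≤
        ∑ t ∈ Finset.Icc 1 T, auxCost α γ β (lam t) (Q t) (Q (t - 1))) :
    α * ∑ t ∈ Finset.Icc 1 T, ∑ n, lam t n * (Θ t n - Pstar t n) ≤ 3 * βstar * HT := by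
  classical
  have hβs : ∀ n, β n ≤ βstar := fun n => hβstar.2 ⟨n, rfl⟩
  obtain ⟨n0, hn0⟩ := hβstar.1
  have hβ0 : 0 ≤ βstar := hn0 ▸ hβ n0
  -- lower bound on auxCost: switching terms are nonneg
  have lower : ∀ (l P Q : Fin N → ℝ),
      α * ∑ n, l n * (1 - P n) ≤ auxCost α γ β l P Q := by
    intro l P Q
    unfold auxCost
    have h1 : (0:ℝ) ≤ ∑ j ∈ Finset.univ.filter
        (fun j => 0 ≤ P j - Q j ∧ P j - Q j ≤ γ), (3 * β j / γ) * (P j - Q j) ^ 2 := by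
      apply Finset.sum_nonneg
      intro j _
      have := hβ j
      positivity
    have h2 : (0:ℝ) ≤ ∑ i ∈ Finset.univ.filter
        (fun i => γ < P i - Q i), 3 * β i * (P i - Q i) := by
      apply Finset.sum_nonneg
      intro i hi
      simp only [Finset.mem_filter] at hi
      have h := hi.2
      have := hβ i
      nlinarith
    linarith
  -- upper bound on auxCost: switching terms ≤ 3β* ∑ |P - Q|
  have upper : ∀ (l P Q : Fin N → ℝ),
      auxCost α γ β l P Q ≤ (∑ n, 3 * βstar * |P n - Q n|) + α * ∑ n, l n * (1 - P n) := by
    intro l P Q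
    unfold auxCost
    have hdisj : Disjoint
        (Finset.univ.filter (fun j => 0 ≤ P j - Q j ∧ P j - Q j ≤ γ))
        (Finset.univ.filter (fun i : Fin N => γ < P i - Q i)) := by
      rw [Finset.disjoint_filter]
      intro x _ hx hx'
      linarith [hx.2]
    have step1 : (∑ j ∈ Finset.univ.filter (fun j => 0 ≤ P j - Q j ∧ P j - Q j ≤ γ),
          (3 * β j / γ) * (P j - Q j) ^ 2) +
        (∑ i ∈ Finset.univ.filter (fun i => γ < P i - Q i), 3 * β i * (P i - Q i))
        ≤ ∑ n, 3 * βstar * |P n - Q n| := by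
      have hA : (∑ j ∈ Finset.univ.filter (fun j => 0 ≤ P j - Q j ∧ P j - Q j ≤ γ),
            (3 * β j / γ) * (P j - Q j) ^ 2)
          ≤ ∑ j ∈ Finset.univ.filter (fun j => 0 ≤ P j - Q j ∧ P j - Q j ≤ γ),
            3 * βstar * |P j - Q j| := by
        apply Finset.sum_le_sum
        intro j hj
        simp only [Finset.mem_filter] at hj
        obtain ⟨h0, hγ⟩ := hj.2
        rw [abs_of_nonneg h0]
        have hb := hβ j
        have hbs := hβs j
        rw [div_mul_eq_mul_div, div_le_iff₀ hγ0]
        have hd2 : (P j - Q j) ^ 2 ≤ γ * (P j - Q j) := by nlinarith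
        nlinarith [mul_le_mul_of_nonneg_left hd2 (by linarith : (0:ℝ) ≤ 3 * β j),
          mul_le_mul_of_nonneg_right (hβs j) (mul_nonneg hγ0.le h0)]
      have hB : (∑ i ∈ Finset.univ.filter (fun i => γ < P i - Q i), 3 * β i * (P i - Q i))
          ≤ ∑ i ∈ Finset.univ.filter (fun i => γ < P i - Q i), 3 * βstar * |P i - Q i| := by
        apply Finset.sum_le_sum
        intro i hi
        simp only [Finset.mem_filter] at hi
        have h := hi.2
        have h0 : 0 ≤ P i - Q i := by linarith
        rw [abs_of_nonneg h0]
        have hbs := hβs i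
        nlinarith
      calc _ ≤ (∑ j ∈ Finset.univ.filter (fun j => 0 ≤ P j - Q j ∧ P j - Q j ≤ γ),
            3 * βstar * |P j - Q j|) +
          (∑ i ∈ Finset.univ.filter (fun i => γ < P i - Q i), 3 * βstar * |P i - Q i|) :=
            add_le_add hA hB
        _ = ∑ n ∈ (Finset.univ.filter (fun j => 0 ≤ P j - Q j ∧ P j - Q j ≤ γ)) ∪
              (Finset.univ.filter (fun i : Fin N => γ < P i - Q i)),
            3 * βstar * |P n - Q n| := (Finset.sum_union hdisj).symm
        _ ≤ ∑ n, 3 * βstar * |P n - Q n| := by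
            apply Finset.sum_le_sum_of_subset_of_nonneg (Finset.subset_univ _)
            intro n _ _
            positivity
    linarith
  -- Θ is feasible
  have hΘD : ∀ t ∈ Finset.Icc 1 T, memD (M : ℝ) (Θ t) := by
    intro t ht
    constructor
    · intro n
      rcases hΘbin t n with h | h <;> simp [h]
    · rw [hΘcard t ht]
  have hopt := hPopt Θ hΘ0 hΘD
  -- chain of inequalities
  have hlow : ∑ t ∈ Finset.Icc 1 T, α * ∑ n, lam t n * (1 - Pstar t n) ≤
      ∑ t ∈ Finset.Icc 1 T, auxCost α γ β (lam t) (Pstar t) (Pstar (t - 1)) :=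
    Finset.sum_le_sum fun t _ => lower (lam t) (Pstar t) (Pstar (t - 1))
  have hup : ∑ t ∈ Finset.Icc 1 T, auxCost α γ β (lam t) (Θ t) (Θ (t - 1)) ≤
      ∑ t ∈ Finset.Icc 1 T, ((∑ n, 3 * βstar * |Θ t n - Θ (t - 1) n|) +
        α * ∑ n, lam t n * (1 - Θ t n)) :=
    Finset.sum_le_sum fun t _ => upper (lam t) (Θ t) (Θ (t - 1))
  have hsplit : ∑ t ∈ Finset.Icc 1 T, ((∑ n, 3 * βstar * |Θ t n - Θ (t - 1) n|) +
        α * ∑ n, lam t n * (1 - Θ t n)) =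
      3 * βstar * (∑ t ∈ Finset.Icc 1 T, ∑ n, |Θ t n - Θ (t - 1) n|) +
      ∑ t ∈ Finset.Icc 1 T, α * ∑ n, lam t n * (1 - Θ t n) := by
    rw [Finset.sum_add_distrib, Finset.mul_sum]
    congr 1
    apply Finset.sum_congr rfl
    intro t _
    rw [Finset.mul_sum]
  have hHT : 3 * βstar * (∑ t ∈ Finset.Icc 1 T, ∑ n, |Θ t n - Θ (t - 1) n|) ≤
      3 * βstar * HT := by
    apply mul_le_mul_of_nonneg_left hpath
    positivity
  have hkey : α * ∑ t ∈ Finset.Icc 1 T, ∑ n, lam t n * (Θ t n - Pstar t n) =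
      (∑ t ∈ Finset.Icc 1 T, α * ∑ n, lam t n * (1 - Pstar t n)) -
      (∑ t ∈ Finset.Icc 1 T, α * ∑ n, lam t n * (1 - Θ t n)) := by
    rw [← Finset.sum_sub_distrib, Finset.mul_sum]
    apply Finset.sum_congr rfl
    intro t _
    rw [← mul_sub, ← Finset.sum_sub_distrib]
    congr 1
    apply Finset.sum_congr rfl
    intro n _
    ring
  linarith
end
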